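/- For all nonnegative integers n: r_{2n+1}(s,q) = (1+s) sum_{k=0}^n (-q;q)_k q^{k(k+1)/2} s^k (n choose k)_{q^2} r_{n-k}(s^2, q^2). -/

import Mathlib

/-
Put `p = q²`, `c_k = (-q;q)_k q^(k(k-1)/2)` and `S_n(w; s) = ∑_k c_k (ws)^k [n,k]_p r_{n-k}(s², p)`.
The odd case `r_{2n+1}(s) = (1 + s) S_n(q; s)` is proved together with the even one
`r_{2n}(s) = S_n(1; s)`, by induction on `n` from `r_{m+1}(s) = s r_m(s) + r_m(qs)`. What makes this
work is how `S_n` reacts to `s ↦ qs`: expanding `r_j(p s²) = r_j(s²) - (1 - p^j) s² r_{j-1}(s²)`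
and absorbing `1 - p^(n-k)` into `[n,k]_p` shifts the summation index, and then
`c_{k+1} = c_k q^k (1 + q^(k+1))` turns the result into `S_n` with the weight `w` multiplied by `q`.
-/

open Finset

/-- Gaussian (q-)binomial coefficient, defined over any commutative ring by the
Pascal-type recurrence `[n+1, k+1] = [n, k] + q^(k+1) * [n, k+1]`. -/
def qbinom {R : Type*} [CommRing R] (q : R) : ℕ → ℕ → R
  | _, 0 => 1
  | 0, _ + 1 => 0
  | n + 1, k + 1 => qbinom q n k + q ^ (k + 1) * qbinom q n (k + 1)
/-- Rogers-Szegő polynomial `r_n(s,q) = ∑_{j=0}^n [n,j]_q s^j`. -/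
def rs {R : Type*} [CommRing R] (n : ℕ) (s q : R) : R :=
  ∑ j ∈ Finset.range (n + 1), qbinom q n j * s ^ j

lemma sum_range_succ_shift_of_eq_zero {M : Type*} [AddCommMonoid M] (f : ℕ → M) (n : ℕ)
    (h0 : f 0 = 0) (hn : f (n + 1) = 0) :
    ∑ k ∈ range (n + 1), f (k + 1) = ∑ k ∈ range (n + 1), f k := by
  rw [← add_zero (∑ k ∈ range (n + 1), f (k + 1)), ← h0, ← sum_range_succ', sum_range_succ, hn,
    add_zero]

section

variable {R : Type*} [CommRing R]

lemma qbinom_zero_right (q : R) (n : ℕ) : qbinom q n 0 = 1 := by cases n <;> rfl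

lemma qbinom_succ_succ (q : R) (n k : ℕ) :
    qbinom q (n + 1) (k + 1) = qbinom q n k + q ^ (k + 1) * qbinom q n (k + 1) := rfl

lemma qbinom_eq_zero_of_lt (q : R) {n k : ℕ} (h : n < k) : qbinom q n k = 0 := by
  induction n generalizing k with
  | zero => obtain ⟨k, rfl⟩ := Nat.exists_eq_add_of_lt h; rfl
  | succ n ih =>
    obtain ⟨k, rfl⟩ := Nat.exists_eq_add_of_lt (Nat.zero_lt_of_lt h)
    rw [qbinom_succ_succ, ih (by omega), ih (by omega)]
    ring

lemma qbinom_succ_right_eq (q : R) {n k : ℕ} (h : k ≤ n) :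
    (1 - q ^ (k + 1)) * qbinom q n (k + 1) = (1 - q ^ (n - k)) * qbinom q n k := by
  induction n generalizing k with
  | zero =>
    obtain rfl : k = 0 := by omega
    simp [qbinom_eq_zero_of_lt q zero_lt_one]
  | succ n ih =>
    rcases h.eq_or_lt with rfl | hlt
    · simp [qbinom_eq_zero_of_lt q (by omega : n + 1 < n + 1 + 1)]
    cases k with
    | zero =>
      have hpow : q ^ 1 * q ^ n = q ^ (n + 1) := by ring
      have ih₀ := ih (Nat.zero_le n)
      simp only [qbinom_succ_succ, qbinom_zero_right, Nat.sub_zero, zero_add] at ih₀ ⊢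
      linear_combination q * ih₀ + hpow
    | succ k =>
      have hpow₁ : q ^ (k + 1) * q ^ (n - k) = q ^ (n + 1) := by
        rw [← pow_add]; congr 1; omega
      have hpow₂ : q ^ (k + 2) * q ^ (n - (k + 1)) = q ^ (n + 1) := by
        rw [← pow_add]; congr 1; omega
      rw [qbinom_succ_succ, qbinom_succ_succ, show n + 1 - (k + 1) = n - k by omega]
      linear_combination ih (by omega : k ≤ n) + q ^ (k + 2) * ih (by omega : k + 1 ≤ n)
        + qbinom q n (k + 1) * hpow₁ - qbinom q n (k + 1) * hpow₂

lemma one_sub_pow_succ_mul_qbinom (q : R) {n k : ℕ} (h : k ≤ n) :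
    (1 - q ^ (k + 1)) * qbinom q (n + 1) (k + 1) = (1 - q ^ (n + 1)) * qbinom q n k := by
  have hpow : q ^ (k + 1) * q ^ (n - k) = q ^ (n + 1) := by
    rw [← pow_add]; congr 1; omega
  rw [qbinom_succ_succ]
  linear_combination q ^ (k + 1) * qbinom_succ_right_eq q h - qbinom q n k * hpow

lemma rs_zero (s q : R) : rs 0 s q = 1 := by simp [rs, qbinom]

lemma rs_succ (n : ℕ) (s q : R) : rs (n + 1) s q = s * rs n s q + rs n (q * s) q := by
  have hlast : qbinom q n (n + 1) * (q * s) ^ (n + 1) = 0 := by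
    rw [qbinom_eq_zero_of_lt q n.lt_succ_self, zero_mul]
  rw [rs, rs, rs, sum_range_succ' _ (n + 1),
    ← add_zero (∑ k ∈ range (n + 1), qbinom q n k * (q * s) ^ k), ← hlast, ← sum_range_succ,
    sum_range_succ' _ (n + 1), mul_sum, ← add_assoc, ← sum_add_distrib]
  simp only [qbinom_succ_succ, qbinom_zero_right, pow_zero]
  congr 1
  exact sum_congr rfl fun k _ => by ring

lemma rs_q_mul (n : ℕ) (s q : R) :
    rs n (q * s) q = rs n s q - (1 - q ^ n) * s * rs (n - 1) s q := by
  cases n with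
  | zero => simp [rs_zero]
  | succ n =>
    have hdiff : rs (n + 1) s q - rs (n + 1) (q * s) q = (1 - q ^ (n + 1)) * s * rs n s q := by
      rw [rs, rs, rs, ← sum_sub_distrib, sum_range_succ', mul_sum]
      simp only [pow_zero, sub_self, add_zero]
      refine sum_congr rfl fun k hk => ?_
      have hkn : k ≤ n := Nat.lt_succ_iff.mp (mem_range.mp hk)
      linear_combination s ^ (k + 1) * one_sub_pow_succ_mul_qbinom q hkn
    rw [Nat.add_sub_cancel]
    linear_combination -hdiff

-- `(-q;q)_k q^(k(k-1)/2)`, with `q^(k(k-1)/2) = ∏_{i<k} q^i` spread over the factors.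
def bisectCoeff (q : R) (k : ℕ) : R := ∏ i ∈ range k, q ^ i * (1 + q ^ (i + 1))

lemma bisectCoeff_mul_pow (q : R) (k : ℕ) :
    bisectCoeff q k * q ^ k = (∏ i ∈ range k, (1 + q ^ (i + 1))) * q ^ (k * (k + 1) / 2) := by
  have hexp : ∑ i ∈ range k, i + k = k * (k + 1) / 2 := by
    rw [← sum_range_succ, sum_range_id, Nat.add_sub_cancel, mul_comm]
  rw [bisectCoeff, prod_mul_distrib, prod_pow_eq_pow_sum, ← hexp, pow_add]
  ring

lemma bisectCoeff_succ (q : R) (k : ℕ) :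
    bisectCoeff q (k + 1) = bisectCoeff q k * (q ^ k * (1 + q ^ (k + 1))) :=
  prod_range_succ _ k

def bisectSum (q w s : R) (n : ℕ) : R :=
  ∑ k ∈ range (n + 1),
    bisectCoeff q k * (w * s) ^ k * qbinom (q ^ 2) n k * rs (n - k) (s ^ 2) (q ^ 2)

lemma bisectSum_shift (q w s : R) (n : ℕ) :
    w * (bisectSum q w (q * s) n - bisectSum q (q * w) s n) =
      s * (bisectSum q (q * w) s n - bisectSum q w s n) := by
  set g : ℕ → R := fun k =>
    bisectCoeff q k * ((w * s) ^ k - (q * w * s) ^ k) * qbinom (q ^ 2) n k *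
      rs (n - k) (s ^ 2) (q ^ 2)
  have hlhs : w * (bisectSum q w (q * s) n - bisectSum q (q * w) s n) =
      -s * ∑ k ∈ range (n + 1), g (k + 1) := by
    rw [bisectSum, bisectSum, ← sum_sub_distrib, mul_sum, mul_sum]
    refine sum_congr rfl fun k hk => ?_
    have hkn : k ≤ n := Nat.lt_succ_iff.mp (mem_range.mp hk)
    simp only [g, mul_pow q s, rs_q_mul, Nat.sub_sub, bisectCoeff_succ]
    linear_combination
      s * bisectCoeff q k * q ^ k * (w * s) ^ (k + 1) * rs (n - (k + 1)) (s ^ 2) (q ^ 2) *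
        qbinom_succ_right_eq (q ^ 2) hkn
  have hrhs : s * (bisectSum q (q * w) s n - bisectSum q w s n) =
      -s * ∑ k ∈ range (n + 1), g k := by
    rw [bisectSum, bisectSum, ← sum_sub_distrib, mul_sum, mul_sum]
    exact sum_congr rfl fun k _ => by ring
  have hg₀ : g 0 = 0 := by simp [g]
  have hgn : g (n + 1) = 0 := by simp [g, qbinom_eq_zero_of_lt (q ^ 2) n.lt_succ_self]
  rw [hlhs, hrhs, sum_range_succ_shift_of_eq_zero g n hg₀ hgn]

lemma bisectSum_succ (q w s : R) (n : ℕ) :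
    bisectSum q w s (n + 1) = bisectSum q (q * w) (q * s) n + w * s * bisectSum q (q * w) s n +
      s * (s + q * w) * bisectSum q (q ^ 2 * w) s n := by
  set X : ℕ → R := fun k =>
    bisectCoeff q k * (q ^ 2 * w * s) ^ k * qbinom (q ^ 2) n k * rs (n + 1 - k) (s ^ 2) (q ^ 2)
  set Y : ℕ → R := fun k =>
    bisectCoeff q (k + 1) * (w * s) ^ (k + 1) * qbinom (q ^ 2) n k * rs (n - k) (s ^ 2) (q ^ 2)
  have hpascal : bisectSum q w s (n + 1) = ∑ k ∈ range (n + 1), (Y k + X (k + 1)) + X 0 := by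
    rw [bisectSum, sum_range_succ']
    congr 1
    · refine sum_congr rfl fun k _ => ?_
      simp only [X, Y, qbinom_succ_succ, Nat.add_sub_add_right]
      ring
    · simp [X, qbinom_zero_right]
  have hXn : X (n + 1) = 0 := by simp [X, qbinom_eq_zero_of_lt (q ^ 2) n.lt_succ_self]
  rw [hpascal, sum_add_distrib, add_assoc, ← sum_range_succ', sum_range_succ X, hXn, add_zero,
    ← sum_add_distrib, bisectSum, bisectSum, bisectSum, mul_sum, mul_sum, ← sum_add_distrib,
    ← sum_add_distrib]
  refine sum_congr rfl fun k hk => ?_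
  have hkn : k ≤ n := Nat.lt_succ_iff.mp (mem_range.mp hk)
  simp only [X, Y, Nat.succ_sub hkn, rs_succ, bisectCoeff_succ, mul_pow q s]
  ring

lemma rs_two_mul_add_one_of_forall {q : R} {n : ℕ} (h : ∀ s, rs (2 * n) s q = bisectSum q 1 s n)
    (s : R) : rs (2 * n + 1) s q = (1 + s) * bisectSum q q s n := by
  have hshift := bisectSum_shift q 1 s n
  rw [mul_one] at hshift
  rw [rs_succ, h, h]
  linear_combination hshift

lemma rs_two_mul (q s : R) (n : ℕ) : rs (2 * n) s q = bisectSum q 1 s n := by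
  induction n generalizing s with
  | zero => simp [bisectSum, bisectCoeff, rs_zero, qbinom_zero_right]
  | succ n ih =>
    have hodd := rs_two_mul_add_one_of_forall ih
    have hshift := bisectSum_shift q q s n
    rw [← sq] at hshift
    rw [show 2 * (n + 1) = 2 * n + 1 + 1 by ring, rs_succ, hodd, hodd, bisectSum_succ]
    simp only [mul_one]
    linear_combination s * hshift

end

theorem stmt9 {R : Type*} [CommRing R] (s q : R) (n : ℕ) :
    rs (2 * n + 1) s q =
      (1 + s) * ∑ k ∈ Finset.range (n + 1),
        (∏ i ∈ Finset.range k, (1 + q ^ (i + 1))) * q ^ (k * (k + 1) / 2) * s ^ k *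
          qbinom (q ^ 2) n k * rs (n - k) (s ^ 2) (q ^ 2) := by
  rw [rs_two_mul_add_one_of_forall (rs_two_mul q · n), bisectSum]
  congr 1
  refine sum_congr rfl fun k _ => ?_
  rw [← bisectCoeff_mul_pow, mul_pow]
  ring
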